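/- arXiv:2105.02164 — 2 statements merged into one kernel-verified Lean document; each statement's English description precedes it below -/
import Mathlib

section
/- For jointly Gaussian random variables (X, Y) where X = sqrt(1-ρ²)·Z₁ + ρ·Z₂ and Y = Z₂ with Z₁, Z₂ independent standard normals and ρ ∈ [-1,1], the covariance of |X| and |Y| equals φ(ρ) = (2/π)(ρ·arcsin(ρ) + sqrt(1-ρ²) - 1). -/
/-!
By independence, `(Z₁, Z₂)` has law `N(0,1) ⊗ N(0,1)`, whose density `(2π)⁻¹ exp (-r²/2)` depends
only on the radius. With `α = arccos ρ` we have `(√(1 - ρ²), ρ) = (sin α, cos α)`, so in polar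
coordinates `X = r sin (θ + α)` and `Y = r sin θ`. Each of `E|XY|`, `E|X|`, `E|Y|` therefore splits
into a Gamma-type radial integral times an angular integral over `[-π, π]`. The angular integrands
have period `π`; on `[0, π]`, `sin θ ≥ 0` and `sin (θ + α)` changes sign only at `π - α`, which
yields `∫ |sin (θ + α)| |sin θ| = 2 sin α + (π - 2α) cos α` and `∫ |sin (θ + α)| = 4`.
-/

open MeasureTheory ProbabilityTheory Real Set intervalIntegral

lemma Function.Periodic.intervalIntegral_neg_eq_two_mul {g : ℝ → ℝ} {T : ℝ}
    (hg : Function.Periodic g T) (hcont : Continuous g) :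
    ∫ x in -T..T, g x = 2 * ∫ x in 0..T, g x := by
  have hshift : ∫ x in -T..0, g x = ∫ x in 0..T, g x := by
    simpa using hg.intervalIntegral_add_eq (-T) 0
  rw [← integral_add_adjacent_intervals (hcont.intervalIntegrable (-T) 0)
    (hcont.intervalIntegrable 0 T), hshift]
  ring

lemma periodic_abs_sin_add (α : ℝ) : Function.Periodic (fun θ => |sin (θ + α)|) π := fun θ => by
  simp [add_right_comm θ π α, sin_add_pi]

lemma integral_abs_sin_add (α : ℝ) : ∫ θ in -π..π, |sin (θ + α)| = 4 := by
  have hshift := (periodic_abs_sin_add 0).intervalIntegral_add_eq α 0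
  simp only [add_zero, zero_add] at hshift
  have hsin : ∫ θ in 0..π, |sin θ| = ∫ θ in 0..π, sin θ :=
    integral_congr fun θ hθ => by
      rw [uIcc_of_le pi_pos.le] at hθ
      exact abs_of_nonneg (sin_nonneg_of_nonneg_of_le_pi hθ.1 hθ.2)
  rw [(periodic_abs_sin_add α).intervalIntegral_neg_eq_two_mul (by fun_prop),
    integral_comp_add_right (fun x => |sin x|), zero_add, add_comm π α, hshift, hsin,
    integral_sin, cos_zero, cos_pi]
  norm_num

lemma integral_sin_add_mul_sin (α a b : ℝ) :
    ∫ θ in a..b, sin (θ + α) * sin θ =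
      (b * cos α / 2 - sin (2 * b + α) / 4) - (a * cos α / 2 - sin (2 * a + α) / 4) := by
  refine integral_eq_sub_of_hasDerivAt (f := fun x => x * cos α / 2 - sin (2 * x + α) / 4)
    (fun x _ => ?_) ((by fun_prop : Continuous fun θ => sin (θ + α) * sin θ).intervalIntegrable _ _)
  have hprod : sin (x + α) * sin x = cos α / 2 - 2 * cos (2 * x + α) / 4 := by
    have h := cos_sub_cos α (2 * x + α)
    rw [show (α + (2 * x + α)) / 2 = x + α by ring, show (α - (2 * x + α)) / 2 = -x by ring,
      sin_neg] at h
    linarith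
  rw [hprod]
  exact (((hasDerivAt_id x).mul_const _).div_const 2).sub
    ((((hasDerivAt_id x).const_mul 2).add_const α).sin.div_const 4)
    |>.congr_deriv (by simp only [id]; ring)

lemma integral_abs_sin_add_mul_abs_sin {α : ℝ} (hα₀ : 0 ≤ α) (hαπ : α ≤ π) :
    ∫ θ in -π..π, |sin (θ + α)| * |sin θ| = 2 * sin α + (π - 2 * α) * cos α := by
  have hperiodic : Function.Periodic (fun θ => |sin (θ + α)| * |sin θ|) π := fun θ => by
    simp [add_right_comm θ π α, sin_add_pi]
  have hcont : Continuous fun θ => |sin (θ + α)| * |sin θ| := by fun_prop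
  have hpos : ∫ θ in 0..π - α, |sin (θ + α)| * |sin θ| = ∫ θ in 0..π - α, sin (θ + α) * sin θ :=
    integral_congr fun θ hθ => by
      rw [uIcc_of_le (by linarith)] at hθ
      rw [abs_of_nonneg (sin_nonneg_of_nonneg_of_le_pi (by linarith [hθ.1]) (by linarith [hθ.2])),
        abs_of_nonneg (sin_nonneg_of_nonneg_of_le_pi hθ.1 (by linarith [hθ.2]))]
  have hneg :
      ∫ θ in π - α..π, |sin (θ + α)| * |sin θ| = -∫ θ in π - α..π, sin (θ + α) * sin θ := by
    rw [← intervalIntegral.integral_neg]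
    refine integral_congr fun θ hθ => ?_
    rw [uIcc_of_le (by linarith)] at hθ
    have hsin : sin (θ + α) ≤ 0 := by
      rw [← sin_sub_two_pi]
      exact sin_nonpos_of_nonpos_of_neg_pi_le (by linarith [hθ.2]) (by linarith [hθ.1])
    rw [abs_of_nonpos hsin, abs_of_nonneg (sin_nonneg_of_nonneg_of_le_pi (by linarith [hθ.1]) hθ.2)]
    ring
  rw [hperiodic.intervalIntegral_neg_eq_two_mul hcont, ← integral_add_adjacent_intervals
    (hcont.intervalIntegrable 0 (π - α)) (hcont.intervalIntegrable (π - α) π), hpos, hneg,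
    integral_sin_add_mul_sin, integral_sin_add_mul_sin]
  have h₁ : sin (2 * (π - α) + α) = -sin α := by
    rw [show 2 * (π - α) + α = -α + 2 * π by ring, sin_add_two_pi, sin_neg]
  have h₂ : sin (2 * π + α) = sin α := by rw [add_comm, sin_add_two_pi]
  rw [h₁, h₂, mul_zero, zero_add, zero_mul]
  ring

lemma integral_Ioi_pow_mul_exp_neg_sq_div_two (n : ℕ) :
    ∫ r in Ioi (0 : ℝ), r ^ n * exp (-r ^ 2 / 2) =
      2 ^ (((n : ℝ) - 1) / 2) * Gamma ((n + 1) / 2) := by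
  have h := integral_rpow_mul_exp_neg_mul_rpow (p := 2) (q := n) (b := 1 / 2) two_pos
    (by linarith [n.cast_nonneg (α := ℝ)]) one_half_pos
  have hrpow : ∫ r in Ioi (0 : ℝ), r ^ n * exp (-r ^ 2 / 2) =
      ∫ r in Ioi (0 : ℝ), r ^ (n : ℝ) * exp (-(1 / 2) * r ^ (2 : ℝ)) := by
    refine setIntegral_congr_fun measurableSet_Ioi fun r _ => ?_
    rw [rpow_natCast, rpow_two]
    ring_nf
  rw [hrpow, h, one_div, inv_rpow two_pos.le, ← rpow_neg two_pos.le, ← rpow_neg_one,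
    ← rpow_add two_pos]
  ring_nf

lemma integral_Ioi_pow_three_mul_exp_neg_sq_div_two :
    ∫ r in Ioi (0 : ℝ), r ^ 3 * exp (-r ^ 2 / 2) = 2 := by
  rw [integral_Ioi_pow_mul_exp_neg_sq_div_two]
  norm_num

lemma integral_Ioi_sq_mul_exp_neg_sq_div_two :
    ∫ r in Ioi (0 : ℝ), r ^ 2 * exp (-r ^ 2 / 2) = √(π / 2) := by
  have hGamma : Gamma (3 / 2) = √π / 2 := by
    rw [show (3 / 2 : ℝ) = 1 / 2 + 1 by norm_num, Gamma_add_one one_half_pos.ne',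
      Gamma_one_half_eq]
    ring
  rw [integral_Ioi_pow_mul_exp_neg_sq_div_two, sqrt_div' π two_pos.le]
  norm_num [hGamma, ← sqrt_eq_rpow]
  field_simp
  exact sq_sqrt two_pos.le

lemma ProbabilityTheory.IndepFun.integral_comp_prodMk {Ω α β E : Type*} [MeasurableSpace Ω]
    [MeasurableSpace α] [MeasurableSpace β] [NormedAddCommGroup E] [NormedSpace ℝ E]
    {μ : Measure Ω} [IsFiniteMeasure μ] {X : Ω → α} {Y : Ω → β} (hXY : IndepFun X Y μ)
    (hX : AEMeasurable X μ) (hY : AEMeasurable Y μ) {f : α × β → E}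
    (hf : AEStronglyMeasurable f ((μ.map X).prod (μ.map Y))) :
    ∫ ω, f (X ω, Y ω) ∂μ = ∫ p, f p ∂(μ.map X).prod (μ.map Y) := by
  rw [← hXY.map_prod_eq_prod_map_map hX hY] at hf ⊢
  exact (integral_map (hX.prodMk hY) hf).symm

lemma integral_gaussianReal_prod_eq_integral_smul {E : Type*} [NormedAddCommGroup E]
    [NormedSpace ℝ E] {m₁ m₂ : ℝ} {v₁ v₂ : NNReal} (hv₁ : v₁ ≠ 0) (hv₂ : v₂ ≠ 0)
    (f : ℝ × ℝ → E) :
    ∫ p, f p ∂(gaussianReal m₁ v₁).prod (gaussianReal m₂ v₂) =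
      ∫ p, (gaussianPDFReal m₁ v₁ p.1 * gaussianPDFReal m₂ v₂ p.2) • f p := by
  rw [gaussianReal_of_var_ne_zero _ hv₁, gaussianReal_of_var_ne_zero _ hv₂,
    prod_withDensity (measurable_gaussianPDF _ _) (measurable_gaussianPDF _ _),
    ← Measure.volume_eq_prod, integral_withDensity_eq_integral_toReal_smul (by fun_prop)
      (ae_of_all _ fun _ => ENNReal.mul_lt_top gaussianPDF_lt_top gaussianPDF_lt_top)]
  simp only [ENNReal.toReal_mul, toReal_gaussianPDF]

lemma gaussianPDFReal_mul_cos_mul_gaussianPDFReal_mul_sin (r θ : ℝ) :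
    gaussianPDFReal 0 1 (r * cos θ) * gaussianPDFReal 0 1 (r * sin θ) =
      (2 * π)⁻¹ * exp (-r ^ 2 / 2) := by
  have hsq : (r * cos θ) ^ 2 + (r * sin θ) ^ 2 = r ^ 2 := by
    rw [mul_pow, mul_pow, ← mul_add, cos_sq_add_sin_sq, mul_one]
  simp only [gaussianPDFReal, NNReal.coe_one, mul_one, sub_zero]
  rw [mul_mul_mul_comm, ← exp_add, ← mul_inv, mul_self_sqrt (by positivity)]
  congr 2
  linarith

lemma integral_gaussianReal_prod_of_polar (f : ℝ × ℝ → ℝ) (n : ℕ) (Θ : ℝ → ℝ)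
    (hf : ∀ r > 0, ∀ θ, f (r * cos θ, r * sin θ) = r ^ n * Θ θ) :
    ∫ p, f p ∂(gaussianReal 0 1).prod (gaussianReal 0 1) =
      (2 * π)⁻¹ * (∫ r in Ioi (0 : ℝ), r ^ (n + 1) * exp (-r ^ 2 / 2)) * ∫ θ in -π..π, Θ θ := by
  have hpolar : ∀ p ∈ polarCoord.target,
      p.1 • ((gaussianPDFReal 0 1 (polarCoord.symm p).1 *
        gaussianPDFReal 0 1 (polarCoord.symm p).2) • f (polarCoord.symm p)) =
        (2 * π)⁻¹ * (p.1 ^ (n + 1) * exp (-p.1 ^ 2 / 2)) * Θ p.2 := by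
    rintro ⟨r, θ⟩ ⟨hr, -⟩
    simp only [polarCoord_symm_apply, smul_eq_mul]
    rw [gaussianPDFReal_mul_cos_mul_gaussianPDFReal_mul_sin, hf r hr]
    ring
  rw [integral_gaussianReal_prod_eq_integral_smul one_ne_zero one_ne_zero,
    ← integral_comp_polarCoord_symm,
    setIntegral_congr_fun polarCoord.open_target.measurableSet hpolar, polarCoord_target,
    Measure.volume_eq_prod,
    setIntegral_prod_mul (fun r => (2 * π)⁻¹ * (r ^ (n + 1) * exp (-r ^ 2 / 2))) Θ,
    MeasureTheory.integral_const_mul, integral_of_le (by linarith [pi_pos]),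
    integral_Ioc_eq_integral_Ioo]

lemma sin_mul_add_cos_mul_eq_mul_sin_add (α r θ : ℝ) :
    sin α * (r * cos θ) + cos α * (r * sin θ) = r * sin (θ + α) := by
  rw [sin_add]
  ring

lemma integral_abs_sin_mul_add_cos_mul_gaussianReal_prod (α : ℝ) :
    ∫ p, |sin α * p.1 + cos α * p.2| ∂(gaussianReal 0 1).prod (gaussianReal 0 1) = √(2 / π) := by
  rw [integral_gaussianReal_prod_of_polar _ 1 (fun θ => |sin (θ + α)|) fun r hr θ => by
      rw [sin_mul_add_cos_mul_eq_mul_sin_add, abs_mul, abs_of_pos hr, pow_one],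
    integral_Ioi_sq_mul_exp_neg_sq_div_two, integral_abs_sin_add]
  have hπ := pi_pos
  rw [eq_comm, sqrt_eq_iff_mul_self_eq_of_pos (by positivity)]
  field_simp
  rw [sq_sqrt (by positivity)]
  ring

lemma integral_abs_sin_mul_add_cos_mul_mul_abs_gaussianReal_prod {α : ℝ} (hα₀ : 0 ≤ α)
    (hαπ : α ≤ π) :
    ∫ p, |sin α * p.1 + cos α * p.2| * |p.2| ∂(gaussianReal 0 1).prod (gaussianReal 0 1) =
      (2 * sin α + (π - 2 * α) * cos α) / π := by
  rw [integral_gaussianReal_prod_of_polar _ 2 (fun θ => |sin (θ + α)| * |sin θ|) fun r hr θ => by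
      rw [sin_mul_add_cos_mul_eq_mul_sin_add, abs_mul, abs_mul, abs_of_pos hr]
      ring,
    integral_Ioi_pow_three_mul_exp_neg_sq_div_two, integral_abs_sin_add_mul_abs_sin hα₀ hαπ]
  field_simp

theorem cov_abs_bivariate_gaussian
    {Ω : Type*} [MeasurableSpace Ω] (μ : Measure Ω) [IsProbabilityMeasure μ]
    (Z₁ Z₂ : Ω → ℝ) (hZ₁ : Measurable Z₁) (hZ₂ : Measurable Z₂)
    (hZ₁law : Measure.map Z₁ μ = gaussianReal 0 1)
    (hZ₂law : Measure.map Z₂ μ = gaussianReal 0 1)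
    (hindep : IndepFun Z₁ Z₂ μ)
    (ρ : ℝ) (hρ : ρ ∈ Set.Icc (-1 : ℝ) 1)
    (X Y : Ω → ℝ)
    (hX : X = fun ω => Real.sqrt (1 - ρ ^ 2) * Z₁ ω + ρ * Z₂ ω)
    (hY : Y = Z₂) :
    (∫ ω, |X ω| * |Y ω| ∂μ) - (∫ ω, |X ω| ∂μ) * (∫ ω, |Y ω| ∂μ) =
      (2 / π) * (ρ * arcsin ρ + Real.sqrt (1 - ρ ^ 2) - 1) := by
  subst X Y
  obtain ⟨hρ₁, hρ₂⟩ := hρ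
  have hlaw : ∀ f : ℝ × ℝ → ℝ, Continuous f →
      ∫ ω, f (Z₁ ω, Z₂ ω) ∂μ = ∫ p, f p ∂(gaussianReal 0 1).prod (gaussianReal 0 1) :=
    fun f hf => by
      rw [hindep.integral_comp_prodMk hZ₁.aemeasurable hZ₂.aemeasurable hf.aestronglyMeasurable,
        hZ₁law, hZ₂law]
  have hXY := integral_abs_sin_mul_add_cos_mul_mul_abs_gaussianReal_prod (arccos_nonneg ρ)
    (arccos_le_pi ρ)
  have hX := integral_abs_sin_mul_add_cos_mul_gaussianReal_prod (arccos ρ)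
  have hY := integral_abs_sin_mul_add_cos_mul_gaussianReal_prod 0
  rw [sin_arccos, cos_arccos hρ₁ hρ₂] at hXY hX
  rw [arccos_eq_pi_div_two_sub_arcsin] at hXY
  simp only [sin_zero, cos_zero, zero_mul, one_mul, zero_add] at hY
  rw [hlaw (fun p => |√(1 - ρ ^ 2) * p.1 + ρ * p.2| * |p.2|) (by fun_prop),
    hlaw (fun p => |√(1 - ρ ^ 2) * p.1 + ρ * p.2|) (by fun_prop),
    hlaw (fun p => |p.2|) (by fun_prop), hXY, hX, hY, mul_self_sqrt (by positivity)]
  ring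
end

section
/- Let X₁,…,Xₙ be an i.i.d. sample with bounded density f_l on a neighborhood of a bounded set C, let K be a bounded compactly supported kernel, and define g_n(x) = (1/(n(n−1)h^{2d})) Σ_{i≠j} K((x−Xᵢ)/h)K((x−X_j)/h). Then sup_{x∈C} E|g_n(x) − (E f_n(x))²| = O(1/√(n h^{3d})), where E f_n(x) = h^{-d} E K((x−X)/h). -/
/-!
Write `ξᵢ = K((x - Xᵢ)/h)` and `P = E ξᵢ = hᵈ E f_n(x)`. With `S = Σ (ξᵢ - P)` and
`Q = Σ (ξᵢ - P)²`, the off-diagonal sum satisfies `Σ_{i≠j} ξᵢ ξⱼ - n(n-1)P² = S² - Q + 2(n-1)P S`,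
so the bias is controlled by second moments: `E S² = E Q = n Var ξ ≤ n (sup K) P` by pairwise
independence, and `E|S| ≤ √(E S²)`. Since `K` lives on a ball of radius `h/2`, where `f ≤ B`,
we have `P ≤ min(sup K, c hᵈ) ≤ √(c sup K) h^{d/2}`, which turns the bound into `O(1/√(n h^{3d}))`.
-/

open MeasureTheory ProbabilityTheory Finset

theorem sum_sum_erase_mul_sub_eq {ι : Type*} [DecidableEq ι] (s : Finset ι) (a : ι → ℝ) (P : ℝ) :
    ∑ i ∈ s, ∑ j ∈ s.erase i, a i * a j - #s * (#s - 1) * P ^ 2 =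
      (∑ i ∈ s, (a i - P)) ^ 2 - ∑ i ∈ s, (a i - P) ^ 2 +
        2 * (#s - 1) * P * ∑ i ∈ s, (a i - P) := by
  have hoff : ∑ i ∈ s, ∑ j ∈ s.erase i, a i * a j = (∑ i ∈ s, a i) ^ 2 - ∑ i ∈ s, a i ^ 2 := by
    rw [sq, sum_mul_sum, ← sum_sub_distrib]
    refine sum_congr rfl fun i hi => ?_
    rw [sum_erase_eq_sub hi, sq]
  rw [hoff]
  simp only [sub_sq, sum_add_distrib, sum_sub_distrib, ← sum_mul, ← mul_sum, sum_const,
    nsmul_eq_mul]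
  ring

section Moments

variable {Ω ι : Type*} [MeasurableSpace Ω] {μ : Measure Ω} [IsProbabilityMeasure μ]

theorem sq_integral_abs_le_integral_sq {Y : Ω → ℝ} (hY : MemLp Y 2 μ) :
    (∫ ω, |Y ω| ∂μ) ^ 2 ≤ ∫ ω, Y ω ^ 2 ∂μ := by
  have := variance_eq_sub (X := fun ω => |Y ω|) (μ := μ) hY.abs
  simp only [Pi.pow_apply, sq_abs] at this
  linarith [variance_nonneg (fun ω => |Y ω|) μ]

variable {ξ : ι → Ω → ℝ} {s : Finset ι} {P V : ℝ}

theorem integral_sum_sub_sq_le (hξ : ∀ i ∈ s, MemLp (ξ i) 2 μ) (hmean : ∀ i ∈ s, μ[ξ i] = P)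
    (hvar : ∀ i ∈ s, Var[ξ i; μ] ≤ V) :
    ∫ ω, ∑ i ∈ s, (ξ i ω - P) ^ 2 ∂μ ≤ #s * V :=
  calc ∫ ω, ∑ i ∈ s, (ξ i ω - P) ^ 2 ∂μ = ∑ i ∈ s, Var[ξ i; μ] := by
        rw [integral_finsetSum (f := fun i ω => (ξ i ω - P) ^ 2) s
          fun i hi => ((hξ i hi).sub (memLp_const P)).integrable_sq]
        refine sum_congr rfl fun i hi => ?_
        rw [variance_eq_integral (hξ i hi).aemeasurable, hmean i hi]
    _ ≤ #s * V := by simpa using sum_le_sum hvar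

theorem integral_sq_sum_sub_le (hξ : ∀ i ∈ s, MemLp (ξ i) 2 μ)
    (hind : (s : Set ι).Pairwise fun i j => ξ i ⟂ᵢ[μ] ξ j) (hmean : ∀ i ∈ s, μ[ξ i] = P)
    (hvar : ∀ i ∈ s, Var[ξ i; μ] ≤ V) :
    ∫ ω, (∑ i ∈ s, (ξ i ω - P)) ^ 2 ∂μ ≤ #s * V :=
  calc ∫ ω, (∑ i ∈ s, (ξ i ω - P)) ^ 2 ∂μ = Var[∑ i ∈ s, ξ i; μ] := by
        rw [variance_eq_integral (aemeasurable_sum s fun i hi => (hξ i hi).aemeasurable)]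
        simp only [Finset.sum_apply]
        rw [integral_finsetSum s fun i hi => (hξ i hi).integrable one_le_two,
          sum_congr rfl hmean]
        simp [sum_sub_distrib]
    _ = ∑ i ∈ s, Var[ξ i; μ] := IndepFun.variance_sum hξ hind
    _ ≤ #s * V := by simpa using sum_le_sum hvar

variable [DecidableEq ι]

theorem integral_abs_sum_sum_erase_mul_sub_le (hξ : ∀ i ∈ s, MemLp (ξ i) 2 μ)
    (hind : (s : Set ι).Pairwise fun i j => ξ i ⟂ᵢ[μ] ξ j) (hmean : ∀ i ∈ s, μ[ξ i] = P)
    (hvar : ∀ i ∈ s, Var[ξ i; μ] ≤ V) :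
    ∫ ω, |∑ i ∈ s, ∑ j ∈ s.erase i, ξ i ω * ξ j ω - #s * (#s - 1) * P ^ 2| ∂μ ≤
      2 * #s * V + |2 * (#s - 1) * P| * √(#s * V) := by
  set S : Ω → ℝ := fun ω => ∑ i ∈ s, (ξ i ω - P)
  set Q : Ω → ℝ := fun ω => ∑ i ∈ s, (ξ i ω - P) ^ 2
  set c := 2 * (#s - 1 : ℝ) * P
  have hS : MemLp S 2 μ := memLp_finsetSum s fun i hi => (hξ i hi).sub (memLp_const P)
  have hS_sq_int : Integrable (fun ω => S ω ^ 2) μ := hS.integrable_sq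
  have hS_abs_int : Integrable (fun ω => |S ω|) μ := (hS.integrable one_le_two).abs
  have hQ_int : Integrable Q μ :=
    integrable_finsetSum s fun i hi => ((hξ i hi).sub (memLp_const P)).integrable_sq
  have hS_abs : ∫ ω, |S ω| ∂μ ≤ √(#s * V) := Real.le_sqrt_of_sq_le
    ((sq_integral_abs_le_integral_sq hS).trans (integral_sq_sum_sub_le hξ hind hmean hvar))
  have hpointwise : ∀ ω, |∑ i ∈ s, ∑ j ∈ s.erase i, ξ i ω * ξ j ω - #s * (#s - 1) * P ^ 2| ≤
      S ω ^ 2 + Q ω + |c| * |S ω| := fun ω => by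
    rw [sum_sum_erase_mul_sub_eq, ← abs_mul]
    have hQ0 : 0 ≤ Q ω := sum_nonneg fun i _ => sq_nonneg _
    calc _ ≤ |S ω ^ 2 - Q ω| + |c * S ω| := abs_add_le _ _
      _ ≤ S ω ^ 2 + Q ω + |c * S ω| := by
        gcongr
        exact (abs_sub _ _).trans_eq (by rw [abs_of_nonneg (sq_nonneg _), abs_of_nonneg hQ0])
  calc _ ≤ ∫ ω, S ω ^ 2 + Q ω + |c| * |S ω| ∂μ :=
        integral_mono_of_nonneg (ae_of_all _ fun ω => abs_nonneg _)
          ((hS_sq_int.add hQ_int).add (hS_abs_int.const_mul _)) (ae_of_all _ hpointwise)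
    _ = ∫ ω, S ω ^ 2 ∂μ + ∫ ω, Q ω ∂μ + |c| * ∫ ω, |S ω| ∂μ := by
        rw [integral_add (f := fun ω => S ω ^ 2 + Q ω) (g := fun ω => |c| * |S ω|)
          (hS_sq_int.add hQ_int) (hS_abs_int.const_mul _), integral_add hS_sq_int hQ_int,
          integral_const_mul]
    _ ≤ #s * V + #s * V + |c| * √(#s * V) := by
        gcongr
        exacts [integral_sq_sum_sub_le hξ hind hmean hvar, integral_sum_sub_sq_le hξ hmean hvar]
    _ = 2 * #s * V + |c| * √(#s * V) := by ring

theorem integral_abs_sum_sum_erase_mul_sub_le_of_mem_Icc {M : ℝ} (hs : s.Nonempty)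
    (hξ : ∀ i ∈ s, AEMeasurable (ξ i) μ) (hξM : ∀ i ∈ s, ∀ᵐ ω ∂μ, ξ i ω ∈ Set.Icc 0 M)
    (hind : (s : Set ι).Pairwise fun i j => ξ i ⟂ᵢ[μ] ξ j) (hmean : ∀ i ∈ s, μ[ξ i] = P) :
    ∫ ω, |∑ i ∈ s, ∑ j ∈ s.erase i, ξ i ω * ξ j ω - #s * (#s - 1) * P ^ 2| ∂μ ≤
      2 * #s * (M * P) + 2 * (#s - 1) * P * √(#s * (M * P)) := by
  obtain ⟨i₀, hi₀⟩ := hs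
  have hP : 0 ≤ P := hmean i₀ hi₀ ▸ integral_nonneg_of_ae ((hξM i₀ hi₀).mono fun _ h => h.1)
  have hs1 : (1 : ℝ) ≤ #s := Nat.one_le_cast.mpr (card_pos.mpr ⟨i₀, hi₀⟩)
  rw [← abs_of_nonneg (by nlinarith : 0 ≤ 2 * ((#s : ℝ) - 1) * P)]
  refine integral_abs_sum_sum_erase_mul_sub_le
    (fun i hi => memLp_of_bounded (hξM i hi) (hξ i hi).aestronglyMeasurable 2) hind hmean
    fun i hi => ?_
  have := variance_le_sub_mul_sub (hξM i hi) (hξ i hi)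
  rw [hmean i hi] at this
  nlinarith [sq_nonneg P]

end Moments

theorem integral_comp_eq_integral_mul_of_map_eq_withDensity {Ω E : Type*} [MeasurableSpace Ω]
    [MeasurableSpace E] {μ : Measure Ω} {ν : Measure E} {X : Ω → E} (hX : AEMeasurable X μ)
    {f : E → ℝ} (hf : Measurable f) (hf0 : ∀ u, 0 ≤ f u)
    (hlaw : μ.map X = ν.withDensity fun u => ENNReal.ofReal (f u)) {G : E → ℝ}
    (hG : Measurable G) :
    ∫ ω, G (X ω) ∂μ = ∫ u, G u * f u ∂ν := by
  rw [← integral_map hX hG.aestronglyMeasurable, hlaw,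
    integral_withDensity_eq_integral_toReal_smul hf.ennreal_ofReal
      (ae_of_all _ fun _ => ENNReal.ofReal_lt_top)]
  simp [ENNReal.toReal_ofReal (hf0 _), mul_comm]

theorem integral_kernel_mul_le_of_le_on_ball {E : Type*} [NormedAddCommGroup E] [NormedSpace ℝ E]
    [MeasurableSpace E] [BorelSpace E] [FiniteDimensional ℝ E] (ν : Measure E)
    [ν.IsAddHaarMeasure] {K f : E → ℝ} {BK B h : ℝ} (x : E) (hh : 0 < h)
    (hK0 : ∀ u, 0 ≤ K u) (hK : ∀ u, K u ≤ BK) (hK_supp : ∀ u, ‖u‖ > 1 / 2 → K u = 0)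
    (hf0 : ∀ u, 0 ≤ f u) (hfB : ∀ u ∈ Metric.ball x (h / 2), f u ≤ B) :
    ∫ u, K (h⁻¹ • (x - u)) * f u ∂ν ≤
      BK * B * ν.real (Metric.ball 0 1) * (h / 2) ^ Module.finrank ℝ E := by
  -- `K` vanishes off the closed ball, `f ≤ B` is known on the open one, and the sphere is null.
  have hsphere : ∀ᵐ u ∂ν, u ∉ Metric.sphere x (h / 2) :=
    measure_eq_zero_iff_ae_notMem.mp (Measure.addHaar_sphere_of_ne_zero ν x (by positivity))
  have hbound : ∀ᵐ u ∂ν, K (h⁻¹ • (x - u)) * f u ≤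
      (Metric.closedBall x (h / 2)).indicator (fun _ => BK * B) u := by
    filter_upwards [hsphere] with u hu
    rcases lt_or_gt_of_ne (fun hux => hu (Metric.mem_sphere.mpr hux) : dist u x ≠ h / 2)
      with hlt | hgt
    · rw [Set.indicator_of_mem (Metric.mem_closedBall.mpr hlt.le)]
      exact mul_le_mul (hK _) (hfB u hlt) (hf0 u) ((hK0 0).trans (hK 0))
    · have hK_zero : K (h⁻¹ • (x - u)) = 0 := hK_supp _ (by
        rw [norm_smul, norm_inv, Real.norm_of_nonneg hh.le, ← dist_eq_norm, dist_comm,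
          inv_mul_eq_div, gt_iff_lt, lt_div_iff₀ hh]
        linarith)
      rw [hK_zero, zero_mul, Set.indicator_of_notMem (by simpa using hgt)]
  calc ∫ u, K (h⁻¹ • (x - u)) * f u ∂ν
      ≤ ∫ u, (Metric.closedBall x (h / 2)).indicator (fun _ => BK * B) u ∂ν :=
        integral_mono_of_nonneg (ae_of_all _ fun u => mul_nonneg (hK0 _) (hf0 u))
          ((integrable_indicator_iff measurableSet_closedBall).mpr
            (integrableOn_const measure_closedBall_lt_top.ne)) hbound
    _ = BK * B * ν.real (Metric.ball 0 1) * (h / 2) ^ Module.finrank ℝ E := by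
        rw [integral_indicator_const _ measurableSet_closedBall, measureReal_def,
          Measure.addHaar_closedBall ν x (by positivity), ENNReal.toReal_mul,
          ENNReal.toReal_ofReal (by positivity), measureReal_def, smul_eq_mul]
        ring

theorem le_sqrt_mul_mul_sqrt_of_le_of_le_mul {P a b t : ℝ} (ht : 0 ≤ t) (hP0 : 0 ≤ P)
    (hPa : P ≤ a) (hPb : P ≤ b * t) :
    P ≤ √(a * b) * √t := by
  rw [← Real.sqrt_mul' _ ht]
  exact Real.le_sqrt_of_sq_le (by nlinarith)

theorem ustat_bias_bound_le_of_le {n t P a κ : ℝ} (hn : 2 ≤ n) (ht : 0 < t) (hκ : 0 ≤ κ)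
    (hV : a * P ≤ κ * √t) (hPV : P * √(a * P) ≤ κ * √t) :
    (2 * n * (a * P) + 2 * (n - 1) * P * √(n * (a * P))) / (n * (n - 1) * t ^ 2) ≤
      6 * κ / √(n * t ^ 3) := by
  set q := √t
  set s := √n
  have hq : 0 < q := Real.sqrt_pos.mpr ht
  have hs : 0 < s := Real.sqrt_pos.mpr (by linarith)
  have hqt : q ^ 2 = t := Real.sq_sqrt ht.le
  have hsn : s ^ 2 = n := Real.sq_sqrt (by linarith)
  have hs_le : s ≤ 2 * (n - 1) := by nlinarith
  have hsV : √(n * (a * P)) = s * √(a * P) := Real.sqrt_mul (by linarith) _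
  have hsq : √(n * t ^ 3) = s * q ^ 3 := by
    rw [Real.sqrt_mul (by linarith), ← hqt, show (q ^ 2) ^ 3 = (q ^ 3) ^ 2 by ring,
      Real.sqrt_sq (by positivity)]
  have hnum : 2 * n * (a * P) + 2 * (n - 1) * P * (s * √(a * P)) ≤
      (2 * n + 2 * (n - 1) * s) * (κ * q) :=
    calc 2 * n * (a * P) + 2 * (n - 1) * P * (s * √(a * P))
        = 2 * n * (a * P) + 2 * (n - 1) * s * (P * √(a * P)) := by ring
      _ ≤ 2 * n * (κ * q) + 2 * (n - 1) * s * (κ * q) := by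
          have : 0 ≤ 2 * (n - 1) * s := mul_nonneg (by linarith) hs.le
          gcongr
      _ = _ := by ring
  rw [hsV, hsq, div_le_div_iff₀ (mul_pos (mul_pos (by linarith) (by linarith)) (by positivity))
    (by positivity)]
  calc _ ≤ (2 * n + 2 * (n - 1) * s) * (κ * q) * (s * q ^ 3) := by gcongr
    _ = 2 * (n * s + (n - 1) * n) * κ * t ^ 2 := by
        rw [← hqt]; linear_combination (2 * (n - 1) * κ * q ^ 4) * hsn
    _ ≤ 2 * (n * (2 * (n - 1)) + (n - 1) * n) * κ * t ^ 2 := by gcongr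
    _ = 6 * κ * (n * (n - 1) * t ^ 2) := by ring

theorem ustat_bias_bound_le_rate {n t P a b : ℝ} (hn : 2 ≤ n) (ht : 0 < t) (hP0 : 0 ≤ P)
    (hPa : P ≤ a) (hPb : P ≤ b * t) :
    (2 * n * (a * P) + 2 * (n - 1) * P * √(n * (a * P))) / (n * (n - 1) * t ^ 2) ≤
      6 * (a * √(a * b)) / √(n * t ^ 3) := by
  have ha : 0 ≤ a := hP0.trans hPa
  have hP := le_sqrt_mul_mul_sqrt_of_le_of_le_mul ht.le hP0 hPa hPb
  refine ustat_bias_bound_le_of_le hn ht (by positivity) ?_ ?_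
  · calc a * P ≤ a * (√(a * b) * √t) := by gcongr
      _ = a * √(a * b) * √t := by ring
  · refine (pow_le_pow_iff_left₀ (by positivity) (by positivity) two_ne_zero).mp ?_
    calc (P * √(a * P)) ^ 2 = a * P * P ^ 2 := by
          rw [mul_pow, Real.sq_sqrt (by positivity)]; ring
      _ ≤ a * a * (√(a * b) * √t) ^ 2 := by gcongr
      _ = (a * √(a * b) * √t) ^ 2 := by ring

theorem ustat_kernel_product_bias_bound_general
    {Ω : Type*} [MeasurableSpace Ω] (μ : Measure Ω) [IsProbabilityMeasure μ]
    (d : ℕ)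
    (X : ℕ → Ω → (Fin d → ℝ)) (hXmeas : ∀ i, Measurable (X i))
    (hXindep : iIndepFun X μ)
    (f : (Fin d → ℝ) → ℝ) (hf_meas : Measurable f) (hf_nonneg : ∀ u, 0 ≤ f u)
    (hlaw : ∀ i, Measure.map (X i) μ =
      volume.withDensity (fun u => ENNReal.ofReal (f u)))
    (K : (Fin d → ℝ) → ℝ) (hK_meas : Measurable K) (hK_nonneg : ∀ u, 0 ≤ K u)
    (hK_bdd : ∃ BK, ∀ u, K u ≤ BK)
    (hK_supp : ∀ u : Fin d → ℝ, ‖u‖ > 1 / 2 → K u = 0)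
    (h : ℕ → ℝ) (hh : ∀ n, 0 < h n)
    (C : Set (Fin d → ℝ))
    (B : ℝ) (hfB : ∀ n, ∀ x ∈ Metric.thickening (h n / 2) C, f x ≤ B)
    (g : ℕ → (Fin d → ℝ) → Ω → ℝ)
    (hg : g = fun n x ω => (1 / (n * (n - 1) * (h n) ^ (2 * d))) *
      ∑ i ∈ Finset.range n, ∑ j ∈ (Finset.range n).erase i,
        K ((h n)⁻¹ • (x - X i ω)) * K ((h n)⁻¹ • (x - X j ω)))
    (Efn : ℕ → (Fin d → ℝ) → ℝ)
    (hEfn : Efn = fun n x => ((h n) ^ d)⁻¹ * ∫ u, K ((h n)⁻¹ • (x - u)) * f u) :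
    ∃ c : ℝ, ∀ n, 2 ≤ n → ∀ x ∈ C,
      (∫ ω, |g n x ω - (Efn n x) ^ 2| ∂μ) ≤
        c / Real.sqrt (n * (h n) ^ (3 * d)) := by
  obtain ⟨BK, hBK⟩ := hK_bdd
  set cB := BK * B * volume.real (Metric.ball (0 : Fin d → ℝ) 1) / 2 ^ d
  refine ⟨6 * (BK * √(BK * cB)), fun n hn x hx => ?_⟩
  have hn' : (2 : ℝ) ≤ n := by exact_mod_cast hn
  set φ : (Fin d → ℝ) → ℝ := fun u => K ((h n)⁻¹ • (x - u))
  set P := ∫ u, φ u * f u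
  have hφ : Measurable φ := hK_meas.comp (by fun_prop)
  have hξ_mean : ∀ i, μ[fun ω => φ (X i ω)] = P := fun i =>
    integral_comp_eq_integral_mul_of_map_eq_withDensity (hXmeas i).aemeasurable hf_meas
      hf_nonneg (hlaw i) hφ
  have hP0 : 0 ≤ P := integral_nonneg fun u => mul_nonneg (hK_nonneg _) (hf_nonneg u)
  have hP_le : P ≤ BK := hξ_mean 0 ▸
    (integral_mono_of_nonneg (ae_of_all _ fun ω => hK_nonneg _) (integrable_const BK)
      (ae_of_all _ fun ω => hBK _)).trans_eq (by simp)
  have hP_loc : P ≤ cB * h n ^ d := by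
    have := integral_kernel_mul_le_of_le_on_ball volume x (hh n) hK_nonneg hBK hK_supp hf_nonneg
      fun u hu => hfB n u (Metric.ball_subset_thickening hx _ hu)
    rw [Module.finrank_fin_fun, div_pow] at this
    exact this.trans_eq (by ring)
  have hU := integral_abs_sum_sum_erase_mul_sub_le_of_mem_Icc (s := range n)
    (nonempty_range_iff.mpr (by omega))
    (fun i _ => (hφ.comp (hXmeas i)).aemeasurable)
    (fun i _ => ae_of_all _ fun ω => ⟨hK_nonneg _, hBK _⟩)
    (fun i _ j _ hij => (hXindep.indepFun hij).comp hφ hφ) (fun i _ => hξ_mean i)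
  rw [card_range] at hU
  have hden : 0 < (n : ℝ) * (n - 1) * (h n ^ d) ^ 2 :=
    mul_pos (mul_pos (by linarith) (by linarith)) (pow_pos (pow_pos (hh n) d) 2)
  have hdecomp : ∀ ω, g n x ω - Efn n x ^ 2 =
      (∑ i ∈ range n, ∑ j ∈ (range n).erase i, φ (X i ω) * φ (X j ω) - n * (n - 1) * P ^ 2) /
        (n * (n - 1) * (h n ^ d) ^ 2) := fun ω => by
    simp only [hg, hEfn, φ, P]
    have := hh n
    have : (n : ℝ) - 1 ≠ 0 := by linarith
    field_simp
    ring
  calc ∫ ω, |g n x ω - Efn n x ^ 2| ∂μ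
      = (∫ ω, |∑ i ∈ range n, ∑ j ∈ (range n).erase i, φ (X i ω) * φ (X j ω)
          - n * (n - 1) * P ^ 2| ∂μ) / (n * (n - 1) * (h n ^ d) ^ 2) := by
        simp_rw [hdecomp, abs_div, abs_of_pos hden]
        exact integral_div _ _
    _ ≤ (2 * n * (BK * P) + 2 * (n - 1) * P * √(n * (BK * P))) /
          (n * (n - 1) * (h n ^ d) ^ 2) := by gcongr; exact hU
    _ ≤ 6 * (BK * √(BK * cB)) / √(n * (h n ^ d) ^ 3) :=
        ustat_bias_bound_le_rate hn' (pow_pos (hh n) d) hP0 hP_le hP_loc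
    _ = 6 * (BK * √(BK * cB)) / √(n * h n ^ (3 * d)) := by rw [← pow_mul, mul_comm d 3]

theorem ustat_kernel_product_bias_bound
    {Ω : Type*} [MeasurableSpace Ω] (μ : Measure Ω) [IsProbabilityMeasure μ]
    (d : ℕ) (hd : 0 < d)
    (X : ℕ → Ω → (Fin d → ℝ)) (hXmeas : ∀ i, Measurable (X i))
    (hXindep : iIndepFun X μ)
    (f : (Fin d → ℝ) → ℝ) (hf_meas : Measurable f) (hf_nonneg : ∀ u, 0 ≤ f u)
    (hlaw : ∀ i, Measure.map (X i) μ =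
      volume.withDensity (fun u => ENNReal.ofReal (f u)))
    (K : (Fin d → ℝ) → ℝ) (hK_meas : Measurable K) (hK_nonneg : ∀ u, 0 ≤ K u)
    (hK_bdd : ∃ BK, ∀ u, K u ≤ BK)
    (hK_supp : ∀ u : Fin d → ℝ, ‖u‖ > 1 / 2 → K u = 0)
    (h : ℕ → ℝ) (hh : ∀ n, 0 < h n)
    (C : Set (Fin d → ℝ)) (hC : Bornology.IsBounded C)
    (B : ℝ) (hfB : ∀ n, ∀ x ∈ Metric.thickening (h n / 2) C, f x ≤ B)
    (g : ℕ → (Fin d → ℝ) → Ω → ℝ)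
    (hg : g = fun n x ω => (1 / (n * (n - 1) * (h n) ^ (2 * d))) *
      ∑ i ∈ Finset.range n, ∑ j ∈ (Finset.range n).erase i,
        K ((h n)⁻¹ • (x - X i ω)) * K ((h n)⁻¹ • (x - X j ω)))
    (Efn : ℕ → (Fin d → ℝ) → ℝ)
    (hEfn : Efn = fun n x => ((h n) ^ d)⁻¹ * ∫ u, K ((h n)⁻¹ • (x - u)) * f u) :
    ∃ c : ℝ, ∀ n, 2 ≤ n → ∀ x ∈ C,
      (∫ ω, |g n x ω - (Efn n x) ^ 2| ∂μ) ≤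
        c / Real.sqrt (n * (h n) ^ (3 * d)) :=
  ustat_kernel_product_bias_bound_general μ d X hXmeas hXindep f hf_meas hf_nonneg hlaw K hK_meas
    hK_nonneg hK_bdd hK_supp h hh C B hfB g hg Efn hEfn
end
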